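/- Let k ≥ 2, σ_i = i(k−i)/2, and let ξ : I → ℝ^k be a C¹ solution of system (P) on an interval I with ∑_{i=1}^k ξ_i(τ) = 0 for all τ ∈ I. Define b_i, b and B as below. Then B is nonincreasing on I and b is nondecreasing on I (so B and −b are Lyapunov functionals for (P)). Moreover, if ξ is not identically zero on I, then B − b is strictly decreasing on I. -/

import Mathlib

/-!
The bonds `bᵢ` solve the discrete heat equation `bᵢ' = (bᵢ + σᵢ₋₁)(bᵢ₋₁ + bᵢ₊₁ - 2bᵢ)` with
positive rates `bᵢ + σᵢ₋₁ = σᵢ₋₁ e^{-(ξᵢ-ξᵢ₋₁)}` and boundary values `b₁ = b_{k+1} = 0`. By the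
maximum principle `B = max bᵢ` cannot increase and `b = min bᵢ` cannot decrease. If `B - b` is
not strictly decreasing, then `B` and `b` are both constant on some `[τ₁, τ₂]`; at an interior
time a node attaining the maximum has vanishing Laplacian, so the maximum propagates node by node
to the boundary, where it is `0`. Thus all bonds vanish at `τ₁`, i.e. `ξ₁ = ⋯ = ξ_k` there, and
the zero center of mass gives `ξ(τ₁) = 0`. Uniqueness for the smooth autonomous ODE (P) then
forces `ξ ≡ 0` on `I`.
-/

/-- `σᵢ = i(k-i)/2` (so that `σ₀ = σ_k = 0`). -/
noncomputable def sig (k i : ℕ) : ℝ := (i : ℝ) * ((k : ℝ) - (i : ℝ)) / 2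

/-- System (P): for `i = 1,…,k`,
`ξᵢ' = σᵢ₋₁(e^{-(ξᵢ-ξᵢ₋₁)} - 1) - σᵢ(e^{-(ξᵢ₊₁-ξᵢ)} - 1)` on the set `S`
(the conventions for `i = 1` and `i = k` are automatic since `σ₀ = σ_k = 0`). -/
def SolvesP (k : ℕ) (ξ : ℕ → ℝ → ℝ) (S : Set ℝ) : Prop :=
  ∀ i, 1 ≤ i → i ≤ k → ∀ τ ∈ S, HasDerivAt (ξ i)
    (sig k (i - 1) * (Real.exp (-(ξ i τ - ξ (i - 1) τ)) - 1)
      - sig k i * (Real.exp (-(ξ (i + 1) τ - ξ i τ)) - 1)) τ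

open Set Filter Topology Metric

theorem Finset.inf'_eq_neg_sup'_neg {ι : Type*} {s : Finset ι} (hs : s.Nonempty) (f : ι → ℝ) :
    s.inf' hs f = -s.sup' hs fun i => -f i :=
  le_antisymm (le_neg.2 <| Finset.sup'_le _ _ fun _ hi => neg_le_neg (Finset.inf'_le f hi))
    (Finset.le_inf' _ _ fun _ hi => neg_le.1 (Finset.le_sup' (fun i => -f i) hi))

theorem Finset.antitoneOn_sup'_of_deriv_nonpos {ι : Type*} {s : Finset ι} (hs : s.Nonempty)
    {I : Set ℝ} (hI : I.OrdConnected) {c : ι → ℝ → ℝ}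
    (hc : ∀ i ∈ s, ∀ τ ∈ I, DifferentiableAt ℝ (c i) τ)
    (hmax : ∀ τ ∈ I, ∀ i ∈ s, (∀ j ∈ s, c j τ ≤ c i τ) → deriv (c i) τ ≤ 0) :
    AntitoneOn (fun τ => s.sup' hs fun i => c i τ) I := by
  set M : ℝ → ℝ := fun τ => s.sup' hs fun i => c i τ
  intro a ha b hb hab
  have hsub : Set.Icc a b ⊆ I := hI.out ha hb
  have hM : ContinuousOn M (Set.Icc a b) := fun x hx =>
    (ContinuousAt.finset_sup'_apply hs fun i hi =>
      (hc i hi x (hsub hx)).continuousAt).continuousWithinAt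
  refine image_le_of_liminf_slope_right_le_deriv_boundary (B := fun _ => M a) hM le_rfl
    continuousOn_const (fun x _ => hasDerivWithinAt_const x _ (M a)) ?_
    (Set.right_mem_Icc.2 hab)
  intro x hx r hr
  have hxI : x ∈ I := hsub (Set.Ico_subset_Icc_self hx)
  -- every `c j` stays below the line `M x + r (z - x)` just to the right of `x`
  have hline : ∀ j ∈ s, ∀ᶠ z in 𝓝[>] x, c j z < M x + r * (z - x) := by
    intro j hj
    rcases (Finset.le_sup' (fun i => c i x) hj).lt_or_eq with hlt | heq
    · filter_upwards [nhdsWithin_le_nhds ((hc j hj x hxI).continuousAt.eventually_lt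
        continuousAt_const hlt), self_mem_nhdsWithin] with z hz hxz
      nlinarith [Set.mem_Ioi.1 hxz]
    · have hd : deriv (c j) x < r :=
        (hmax x hxI j hj fun l hl => heq ▸ Finset.le_sup' (fun i => c i x) hl).trans_lt hr
      filter_upwards [(hasDerivAt_iff_tendsto_slope.1 (hc j hj x hxI).hasDerivAt).eventually
        (gt_mem_nhds hd) |>.filter_mono (nhdsWithin_mono x fun z hz => ne_of_gt hz),
        self_mem_nhdsWithin] with z hz hxz
      rw [slope_def_field, div_lt_iff₀ (sub_pos.2 hxz)] at hz
      linarith [show c j x = M x from heq]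
  refine Eventually.frequently ?_
  filter_upwards [(eventually_all_finset s).2 hline, self_mem_nhdsWithin] with z hz hxz
  rw [slope_def_field, div_lt_iff₀ (sub_pos.2 hxz)]
  linarith [(Finset.sup'_lt_iff hs).2 hz]

theorem ContDiff.eqOn_of_hasDerivAt {E : Type*} [NormedAddCommGroup E] [NormedSpace ℝ E]
    [ProperSpace E] {v : E → E} (hv : ContDiff ℝ 1 v) {I : Set ℝ} (hI : I.OrdConnected)
    {f g : ℝ → E} (hf : ∀ t ∈ I, HasDerivAt f (v (f t)) t)
    (hg : ∀ t ∈ I, HasDerivAt g (v (g t)) t) {t₀ : ℝ} (ht₀ : t₀ ∈ I) (heq : f t₀ = g t₀) :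
    EqOn f g I := by
  -- on a compact time interval both solutions stay in a ball, on which `v` is Lipschitz
  have hlip : ∀ a ∈ I, ∀ b ∈ I, ∃ K R, LipschitzOnWith K v (closedBall 0 R) ∧
      ∀ t ∈ Icc a b, f t ∈ closedBall 0 R ∧ g t ∈ closedBall 0 R := by
    intro a ha b hb
    have hsub := hI.out ha hb
    obtain ⟨Rf, hRf⟩ := isCompact_Icc.exists_bound_of_continuousOn
      (HasDerivAt.continuousOn fun t ht => hf t (hsub ht))
    obtain ⟨Rg, hRg⟩ := isCompact_Icc.exists_bound_of_continuousOn
      (HasDerivAt.continuousOn fun t ht => hg t (hsub ht))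
    obtain ⟨K, hK⟩ := hv.contDiffOn.exists_lipschitzOnWith one_ne_zero (convex_closedBall 0 _)
      (isCompact_closedBall 0 (max Rf Rg))
    refine ⟨K, max Rf Rg, hK, fun t ht => ⟨?_, ?_⟩⟩ <;> rw [mem_closedBall_zero_iff]
    · exact (hRf t ht).trans (le_max_left _ _)
    · exact (hRg t ht).trans (le_max_right _ _)
  intro t ht
  rcases le_total t₀ t with h | h
  · obtain ⟨K, R, hK, hfg⟩ := hlip t₀ ht₀ t ht
    have hsub := hI.out ht₀ ht
    exact ODE_solution_unique_of_mem_Icc_right (v := fun _ => v) (fun _ _ => hK)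
      (HasDerivAt.continuousOn fun s hs => hf s (hsub hs))
      (fun s hs => (hf s (hsub (Ico_subset_Icc_self hs))).hasDerivWithinAt)
      (fun s hs => (hfg s (Ico_subset_Icc_self hs)).1)
      (HasDerivAt.continuousOn fun s hs => hg s (hsub hs))
      (fun s hs => (hg s (hsub (Ico_subset_Icc_self hs))).hasDerivWithinAt)
      (fun s hs => (hfg s (Ico_subset_Icc_self hs)).2) heq ⟨h, le_rfl⟩
  · obtain ⟨K, R, hK, hfg⟩ := hlip t ht t₀ ht₀
    have hsub := hI.out ht ht₀
    exact ODE_solution_unique_of_mem_Icc_left (v := fun _ => v) (fun _ _ => hK)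
      (HasDerivAt.continuousOn fun s hs => hf s (hsub hs))
      (fun s hs => (hf s (hsub (Ioc_subset_Icc_self hs))).hasDerivWithinAt)
      (fun s hs => (hfg s (Ioc_subset_Icc_self hs)).1)
      (HasDerivAt.continuousOn fun s hs => hg s (hsub hs))
      (fun s hs => (hg s (hsub (Ioc_subset_Icc_self hs))).hasDerivWithinAt)
      (fun s hs => (hfg s (Ioc_subset_Icc_self hs)).2) heq ⟨le_rfl, h⟩

structure IsDiscreteHeatFlow (n : ℕ) (c : ℕ → ℝ → ℝ) (I : Set ℝ) : Prop where
  left_eq_zero : ∀ τ, c 1 τ = 0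
  right_eq_zero : ∀ τ, c n τ = 0
  hasDerivAt : ∀ i, 1 < i → i < n → ∀ τ ∈ I,
    ∃ p > 0, HasDerivAt (c i) (p * (c (i - 1) τ + c (i + 1) τ - 2 * c i τ)) τ

namespace IsDiscreteHeatFlow

variable {n : ℕ} {c : ℕ → ℝ → ℝ} {I : Set ℝ}

theorem neg (h : IsDiscreteHeatFlow n c I) : IsDiscreteHeatFlow n (fun i τ => -c i τ) I where
  left_eq_zero τ := by simp [h.left_eq_zero τ]
  right_eq_zero τ := by simp [h.right_eq_zero τ]
  hasDerivAt i h1 hn τ hτ := by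
    obtain ⟨p, hp, hd⟩ := h.hasDerivAt i h1 hn τ hτ
    exact ⟨p, hp, hd.fun_neg.congr_deriv (by ring)⟩

theorem hasDerivAt_zero_of_boundary (h : IsDiscreteHeatFlow n c I) {i : ℕ} (hi : i = 1 ∨ i = n)
    (τ : ℝ) : HasDerivAt (c i) 0 τ := by
  have : c i = fun _ => 0 := by
    rcases hi with rfl | rfl
    exacts [funext h.left_eq_zero, funext h.right_eq_zero]
  exact this ▸ hasDerivAt_const τ 0

theorem differentiableAt (h : IsDiscreteHeatFlow n c I) {i : ℕ} (hi : i ∈ Finset.Icc 1 n)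
    {τ : ℝ} (hτ : τ ∈ I) : DifferentiableAt ℝ (c i) τ := by
  rw [Finset.mem_Icc] at hi
  by_cases hb : i = 1 ∨ i = n
  · exact (h.hasDerivAt_zero_of_boundary hb τ).differentiableAt
  · obtain ⟨p, -, hd⟩ := h.hasDerivAt i (by omega) (by omega) τ hτ
    exact hd.differentiableAt

theorem deriv_nonpos_of_isMax (h : IsDiscreteHeatFlow n c I) {i : ℕ} (hi : i ∈ Finset.Icc 1 n)
    {τ : ℝ} (hτ : τ ∈ I) (hmax : ∀ j ∈ Finset.Icc 1 n, c j τ ≤ c i τ) : deriv (c i) τ ≤ 0 := by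
  rw [Finset.mem_Icc] at hi
  by_cases hb : i = 1 ∨ i = n
  · exact (h.hasDerivAt_zero_of_boundary hb τ).deriv.le
  · obtain ⟨p, hp, hd⟩ := h.hasDerivAt i (by omega) (by omega) τ hτ
    have hl := hmax (i - 1) (Finset.mem_Icc.2 ⟨by omega, by omega⟩)
    have hr := hmax (i + 1) (Finset.mem_Icc.2 ⟨by omega, by omega⟩)
    rw [hd.deriv]
    exact mul_nonpos_of_nonneg_of_nonpos hp.le (by linarith)

theorem antitoneOn_sup' (h : IsDiscreteHeatFlow n c I) (hI : I.OrdConnected)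
    (hn : (Finset.Icc 1 n).Nonempty) :
    AntitoneOn (fun τ => (Finset.Icc 1 n).sup' hn fun i => c i τ) I :=
  Finset.antitoneOn_sup'_of_deriv_nonpos hn hI (fun _ hi _ hτ => h.differentiableAt hi hτ)
    fun _ hτ _ hi hmax => h.deriv_nonpos_of_isMax hi hτ hmax

theorem sup'_eq_zero_of_isLocalMax (h : IsDiscreteHeatFlow n c I)
    (hn : (Finset.Icc 1 n).Nonempty) {τ : ℝ} (hτ : τ ∈ I)
    (hmax : IsLocalMax (fun τ => (Finset.Icc 1 n).sup' hn fun i => c i τ) τ) :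
    ((Finset.Icc 1 n).sup' hn fun i => c i τ) = 0 := by
  set M := fun τ => (Finset.Icc 1 n).sup' hn fun i => c i τ
  have hle : ∀ j ∈ Finset.Icc 1 n, ∀ σ, c j σ ≤ M σ := fun j hj σ =>
    Finset.le_sup' (fun i => c i σ) hj
  -- an interior node attaining the maximum passes it on to its left neighbour
  suffices ∀ j ∈ Finset.Icc 1 n, c j τ = M τ → M τ = 0 by
    obtain ⟨j, hj, hjM⟩ := Finset.exists_mem_eq_sup' hn fun i => c i τ
    exact this j hj hjM.symm
  intro j
  induction j using Nat.strong_induction_on with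
  | _ j ih =>
    intro hj hjM
    rw [Finset.mem_Icc] at hj
    by_cases hb : j = 1 ∨ j = n
    · rcases hb with rfl | rfl
      · rw [← hjM, h.left_eq_zero]
      · rw [← hjM, h.right_eq_zero]
    obtain ⟨p, hp, hd⟩ := h.hasDerivAt j (by omega) (by omega) τ hτ
    have hloc : IsLocalMax (c j) τ := by
      filter_upwards [hmax] with σ hσ
      exact (hle j (Finset.mem_Icc.2 hj) σ).trans (hjM ▸ hσ)
    have hlap := (mul_eq_zero.1 (hloc.hasDerivAt_eq_zero hd)).resolve_left hp.ne'
    have hl := hle (j - 1) (Finset.mem_Icc.2 ⟨by omega, by omega⟩) τ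
    have hr := hle (j + 1) (Finset.mem_Icc.2 ⟨by omega, by omega⟩) τ
    exact ih (j - 1) (by omega) (Finset.mem_Icc.2 ⟨by omega, by omega⟩) (by linarith)

theorem sup'_eq_zero_of_le (h : IsDiscreteHeatFlow n c I) (hI : I.OrdConnected)
    (hn : (Finset.Icc 1 n).Nonempty) {τ₁ τ₂ : ℝ} (h₁ : τ₁ ∈ I) (h₂ : τ₂ ∈ I) (h₁₂ : τ₁ < τ₂)
    (hle : ((Finset.Icc 1 n).sup' hn fun i => c i τ₁) ≤ (Finset.Icc 1 n).sup' hn fun i => c i τ₂) :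
    ((Finset.Icc 1 n).sup' hn fun i => c i τ₁) = 0 := by
  set M := fun τ => (Finset.Icc 1 n).sup' hn fun i => c i τ
  change M τ₁ ≤ M τ₂ at hle
  show M τ₁ = 0
  have hanti := h.antitoneOn_sup' hI hn
  have hsub : Icc τ₁ τ₂ ⊆ I := hI.out h₁ h₂
  have hconst : ∀ σ ∈ Icc τ₁ τ₂, M σ = M τ₁ := fun σ hσ =>
    le_antisymm (hanti h₁ (hsub hσ) hσ.1) (hle.trans (hanti (hsub hσ) h₂ hσ.2))
  obtain ⟨τₘ, h₁ₘ, hₘ₂⟩ := exists_between h₁₂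
  have hτₘ : τₘ ∈ Icc τ₁ τ₂ := ⟨h₁ₘ.le, hₘ₂.le⟩
  have hloc : IsLocalMax M τₘ := by
    filter_upwards [Icc_mem_nhds h₁ₘ hₘ₂] with σ hσ
    rw [hconst σ hσ, hconst τₘ hτₘ]
  rw [← hconst τₘ hτₘ]
  exact h.sup'_eq_zero_of_isLocalMax hn (hsub hτₘ) hloc

end IsDiscreteHeatFlow

theorem sig_zero (k : ℕ) : sig k 0 = 0 := by simp [sig]

theorem sig_self (k : ℕ) : sig k k = 0 := by simp [sig]

theorem sig_pos {k i : ℕ} (hi : 0 < i) (hik : i < k) : 0 < sig k i := by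
  have : (i : ℝ) < k := by exact_mod_cast hik
  have : (0 : ℝ) < i := by exact_mod_cast hi
  unfold sig
  positivity

noncomputable def bond (k : ℕ) (ξ : ℕ → ℝ → ℝ) (i : ℕ) (τ : ℝ) : ℝ :=
  if 2 ≤ i ∧ i ≤ k then sig k (i - 1) * (Real.exp (-(ξ i τ - ξ (i - 1) τ)) - 1) else 0

section bond

variable {k : ℕ} {ξ : ℕ → ℝ → ℝ}

theorem bond_eq {i : ℕ} (h1 : 1 ≤ i) (hik : i ≤ k + 1) (τ : ℝ) :
    bond k ξ i τ = sig k (i - 1) * (Real.exp (-(ξ i τ - ξ (i - 1) τ)) - 1) := by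
  unfold bond
  split_ifs with h
  · rfl
  · obtain rfl | rfl : i = 1 ∨ i = k + 1 := by omega
    · simp [sig_zero]
    · simp [sig_self]

theorem bond_add_sig_pos {i : ℕ} (h2 : 2 ≤ i) (hik : i ≤ k) (τ : ℝ) :
    0 < bond k ξ i τ + sig k (i - 1) := by
  rw [bond_eq (by omega) (by omega)]
  have := sig_pos (k := k) (i := i - 1) (by omega) (by omega)
  nlinarith [Real.exp_pos (-(ξ i τ - ξ (i - 1) τ))]

theorem succ_eq_of_bond_eq_zero {i : ℕ} (h1 : 1 ≤ i) (hik : i < k) {τ : ℝ}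
    (h : bond k ξ (i + 1) τ = 0) : ξ (i + 1) τ = ξ i τ := by
  rw [bond_eq (by omega) (by omega), Nat.add_sub_cancel] at h
  have hexp := (mul_eq_zero.1 h).resolve_left (sig_pos (by omega) hik).ne'
  have := (Real.exp_eq_one_iff _).1 (sub_eq_zero.1 hexp)
  linarith

theorem eq_zero_of_bond_eq_zero {τ : ℝ} (hsum : ∑ i ∈ Finset.Icc 1 k, ξ i τ = 0)
    (hb : ∀ i ∈ Finset.Icc 1 (k + 1), bond k ξ i τ = 0) :
    ∀ i ∈ Finset.Icc 1 k, ξ i τ = 0 := by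
  have hconst : ∀ i ∈ Finset.Icc 1 k, ξ i τ = ξ 1 τ := by
    intro i hi
    rw [Finset.mem_Icc] at hi
    induction i, hi.1 using Nat.le_induction with
    | base => rfl
    | succ i hi1 ih =>
      rw [succ_eq_of_bond_eq_zero hi1 (by omega) (hb _ (Finset.mem_Icc.2 ⟨by omega, by omega⟩))]
      exact ih ⟨hi1, by omega⟩
  intro i hi
  rw [Finset.sum_congr rfl hconst, Finset.sum_const, Nat.card_Icc, nsmul_eq_mul] at hsum
  rw [hconst i hi]
  rw [Finset.mem_Icc] at hi
  exact (mul_eq_zero.1 hsum).resolve_left (Nat.cast_ne_zero.2 (by omega))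

end bond

noncomputable def rhsP (k : ℕ) (x : ℕ → ℝ) (i : ℕ) : ℝ :=
  sig k (i - 1) * (Real.exp (-(x i - x (i - 1))) - 1)
    - sig k i * (Real.exp (-(x (i + 1) - x i)) - 1)

theorem rhsP_congr {k : ℕ} {x y : ℕ → ℝ} (hxy : ∀ j ∈ Finset.Icc 1 k, x j = y j) {i : ℕ}
    (hi : i ∈ Finset.Icc 1 k) : rhsP k x i = rhsP k y i := by
  simp only [Finset.mem_Icc] at hi hxy
  unfold rhsP
  rw [hxy i hi]
  congr 1
  · rcases hi.1.eq_or_lt with rfl | h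
    · simp [sig_zero]
    · rw [hxy (i - 1) ⟨by omega, by omega⟩]
  · rcases hi.2.eq_or_lt with rfl | h
    · simp [sig_self]
    · rw [hxy (i + 1) ⟨by omega, by omega⟩]

/-- (P) as an autonomous ODE on `ℝ^{1,…,k}`, the missing neighbours `x₀` and `x_{k+1}` being read
as `0` (they are weighted by `σ₀ = σ_k = 0`). -/
noncomputable def vectorFieldP (k : ℕ) (y : Finset.Icc 1 k → ℝ) (i : Finset.Icc 1 k) : ℝ :=
  rhsP k (fun n => if h : n ∈ Finset.Icc 1 k then y ⟨n, h⟩ else 0) i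

theorem contDiff_vectorFieldP (k : ℕ) : ContDiff ℝ 1 (vectorFieldP k) := by
  have hext : ∀ n, ContDiff ℝ 1 fun y : Finset.Icc 1 k → ℝ =>
      if h : n ∈ Finset.Icc 1 k then y ⟨n, h⟩ else 0 := by
    intro n
    by_cases h : n ∈ Finset.Icc 1 k <;> simp only [h, dite_true, dite_false] <;> fun_prop
  refine contDiff_pi.2 fun i => ?_
  unfold vectorFieldP rhsP
  fun_prop

theorem vectorFieldP_zero (k : ℕ) : vectorFieldP k 0 = 0 :=
  funext fun i => by simp [vectorFieldP, rhsP]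

namespace SolvesP

variable {k : ℕ} {ξ : ℕ → ℝ → ℝ} {S : Set ℝ}

theorem hasDerivAt_bond_sub (hξ : SolvesP k ξ S) {i : ℕ} (h1 : 1 ≤ i) (hik : i ≤ k) {τ : ℝ}
    (hτ : τ ∈ S) : HasDerivAt (ξ i) (bond k ξ i τ - bond k ξ (i + 1) τ) τ := by
  rw [bond_eq h1 (by omega), bond_eq (by omega) (by omega), Nat.add_sub_cancel]
  exact hξ i h1 hik τ hτ

theorem isDiscreteHeatFlow_bond (hξ : SolvesP k ξ S) :
    IsDiscreteHeatFlow (k + 1) (bond k ξ) S where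
  left_eq_zero τ := by simp [bond]
  right_eq_zero τ := by simp [bond]
  hasDerivAt i h1 hik τ hτ := by
    refine ⟨_, bond_add_sig_pos (k := k) (ξ := ξ) (i := i) (by omega) (by omega) τ, ?_⟩
    have hdiff := (hξ.hasDerivAt_bond_sub (i := i) (by omega) (by omega) hτ).fun_sub
      (hξ.hasDerivAt_bond_sub (i := i - 1) (by omega) (by omega) hτ)
    rw [Nat.sub_add_cancel (by omega)] at hdiff
    have hbond : bond k ξ i = fun σ => sig k (i - 1) * (Real.exp (-(ξ i σ - ξ (i - 1) σ)) - 1) :=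
      funext (bond_eq (by omega) (by omega))
    refine hbond ▸ ((hdiff.fun_neg.exp.sub_const 1).const_mul (sig k (i - 1))).congr_deriv ?_
    rw [bond_eq (i := i) (by omega) (by omega)]
    ring

theorem eq_zero_of_eq_zero_at (hξ : SolvesP k ξ S) (hS : S.OrdConnected) {τ₀ : ℝ}
    (hτ₀ : τ₀ ∈ S) (h₀ : ∀ i ∈ Finset.Icc 1 k, ξ i τ₀ = 0) :
    ∀ τ ∈ S, ∀ i ∈ Finset.Icc 1 k, ξ i τ = 0 := by
  have hsol : ∀ τ ∈ S,
      HasDerivAt (fun σ (i : Finset.Icc 1 k) => ξ i σ) (vectorFieldP k fun i => ξ i τ) τ := by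
    intro τ hτ
    refine hasDerivAt_pi.2 fun i => ?_
    rw [vectorFieldP, rhsP_congr (y := (ξ · τ)) (fun j hj => by simp [hj]) i.2]
    exact hξ i (Finset.mem_Icc.1 i.2).1 (Finset.mem_Icc.1 i.2).2 τ hτ
  have hzero : ∀ τ ∈ S, HasDerivAt (fun _ => 0) (vectorFieldP k 0) τ := fun τ _ =>
    (hasDerivAt_const τ _).congr_deriv (vectorFieldP_zero k).symm
  intro τ hτ i hi
  exact congrFun ((contDiff_vectorFieldP k).eqOn_of_hasDerivAt hS hsol hzero hτ₀
    (funext fun i => h₀ i i.2) hτ) ⟨i, hi⟩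

end SolvesP

/-- for a solution of (P) on an interval `I` with zero center of mass,
`B = max bᵢ` is nonincreasing and `b = min bᵢ` is nondecreasing on `I`; moreover if `ξ`
is not identically zero on `I` then `B - b` is strictly decreasing on `I`. -/
theorem stmt5 (k : ℕ) (I : Set ℝ) (hI : I.OrdConnected)
    (ξ : ℕ → ℝ → ℝ) (hξ : SolvesP k ξ I)
    (hsum : ∀ τ ∈ I, ∑ i ∈ Finset.Icc 1 k, ξ i τ = 0)
    (b : ℕ → ℝ → ℝ)
    (hb : ∀ i τ, b i τ = if 2 ≤ i ∧ i ≤ k then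
      sig k (i - 1) * (Real.exp (-(ξ i τ - ξ (i - 1) τ)) - 1) else 0)
    (bmin B : ℝ → ℝ)
    (hbmin : ∀ τ, bmin τ
      = (Finset.Icc 1 (k + 1)).inf' (Finset.nonempty_Icc.mpr (by omega)) (fun i => b i τ))
    (hB : ∀ τ, B τ
      = (Finset.Icc 1 (k + 1)).sup' (Finset.nonempty_Icc.mpr (by omega)) (fun i => b i τ)) :
    AntitoneOn B I ∧ MonotoneOn bmin I ∧
      ((¬ ∀ τ ∈ I, ∀ i, 1 ≤ i → i ≤ k → ξ i τ = 0) →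
        StrictAntiOn (fun τ => B τ - bmin τ) I) := by
  obtain rfl : b = bond k ξ := funext₂ hb
  have hne : (Finset.Icc 1 (k + 1)).Nonempty := Finset.nonempty_Icc.2 (by omega)
  have hflow := hξ.isDiscreteHeatFlow_bond
  have hB' : B = fun τ => (Finset.Icc 1 (k + 1)).sup' hne fun i => bond k ξ i τ := funext hB
  have hbmin' : bmin = fun τ => -(Finset.Icc 1 (k + 1)).sup' hne fun i => -bond k ξ i τ :=
    funext fun τ => (hbmin τ).trans (Finset.inf'_eq_neg_sup'_neg hne _)
  subst hB' hbmin'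
  have hmax := hflow.antitoneOn_sup' hI hne
  have hmin := hflow.neg.antitoneOn_sup' hI hne
  refine ⟨hmax, fun _ ha _ hb hab => neg_le_neg (hmin ha hb hab), ?_⟩
  intro hnonzero τ₁ h₁ τ₂ h₂ h₁₂
  by_contra! hle
  have hmax₀ := hflow.sup'_eq_zero_of_le hI hne h₁ h₂ h₁₂ (by linarith [hmin h₁ h₂ h₁₂.le])
  have hmin₀ := hflow.neg.sup'_eq_zero_of_le hI hne h₁ h₂ h₁₂ (by linarith [hmax h₁ h₂ h₁₂.le])
  have hbond : ∀ i ∈ Finset.Icc 1 (k + 1), bond k ξ i τ₁ = 0 := fun i hi =>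
    le_antisymm (hmax₀ ▸ Finset.le_sup' (fun i => bond k ξ i τ₁) hi)
      (neg_nonpos.1 (hmin₀ ▸ Finset.le_sup' (fun i => -bond k ξ i τ₁) hi))
  exact hnonzero fun τ hτ i h1 hik => hξ.eq_zero_of_eq_zero_at hI h₁
    (eq_zero_of_bond_eq_zero (hsum τ₁ h₁) hbond) τ hτ i (Finset.mem_Icc.2 ⟨h1, hik⟩)
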